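/- Let C be a left- and right-cancellative, right-Noetherian category admitting local right lcms and equipped with a Garside map Δ. Let x : A → A be an endomorphism such that for all sufficiently large n, Δ(A) left-divides xⁿ. Then every conjugation from x is cyclic: for every endomorphism y and every morphism f with f ≫ y = x ≫ f, there exist n ≥ 0, morphisms u₁, …, uₙ, and endomorphisms x = x₀, x₁, …, xₙ = y such that f = u₁ ≫ ⋯ ≫ uₙ and for each i, uᵢ ≫ xᵢ = x_{i-1} ≫ uᵢ and uᵢ left-divides x_{i-1}. -/

import Mathlib

open CategoryTheory

/-- `f` left-divides `g` (both with source `X`). -/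
def LDivides {C : Type*} [Category C] {X Y Z : C} (f : X ⟶ Y) (g : X ⟶ Z) : Prop :=
  ∃ h : Y ⟶ Z, g = f ≫ h

/-- `IsCompositeOf S f` means that `f` is a (possibly empty) composite of morphisms
belonging to the class `S`. -/
inductive IsCompositeOf {C : Type*} [Category C]
    (S : ∀ ⦃X Y : C⦄, (X ⟶ Y) → Prop) : ∀ ⦃X Y : C⦄, (X ⟶ Y) → Prop
  | id (X : C) : IsCompositeOf S (𝟙 X)
  | of {X Y : C} {f : X ⟶ Y} : S f → IsCompositeOf S f
  | comp {X Y Z : C} {f : X ⟶ Y} {g : Y ⟶ Z} :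
      IsCompositeOf S f → IsCompositeOf S g → IsCompositeOf S (f ≫ g)

/-- `S` is a Garside family: `S` together with the invertible morphisms generates `C`;
`Isom C ∘ S ⊆ S ∘ Isom C ∪ Isom C`; and every composite of two non-invertible elements of
`S` is in `S ∘ Isom C` or admits an `S`-normal decomposition of length two. -/
def IsGarsideFamily {C : Type*} [Category C]
    (S : ∀ ⦃X Y : C⦄, (X ⟶ Y) → Prop) : Prop :=
  (∀ {X Y : C} (f : X ⟶ Y),
      IsCompositeOf (fun ⦃X' Y'⦄ (g : X' ⟶ Y') => S g ∨ IsIso g) f) ∧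
  (∀ {X Y Z : C} (ε : X ⟶ Y) (f : Y ⟶ Z), IsIso ε → S f →
      (∃ (W : C) (g : X ⟶ W) (ε' : W ⟶ Z), S g ∧ IsIso ε' ∧ ε ≫ f = g ≫ ε') ∨
        IsIso (ε ≫ f)) ∧
  (∀ {X Y Z : C} (f : X ⟶ Y) (g : Y ⟶ Z), S f → S g → ¬ IsIso f → ¬ IsIso g →
      (∃ (W : C) (h : X ⟶ W) (ε : W ⟶ Z), S h ∧ IsIso ε ∧ f ≫ g = h ≫ ε) ∨
      (∃ (Y₁ : C) (f₁ : X ⟶ Y₁) (g₁ : Y₁ ⟶ Z), f ≫ g = f₁ ≫ g₁ ∧ S f₁ ∧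
        (∃ (W : C) (h : Y₁ ⟶ W) (ε : W ⟶ Z), S h ∧ IsIso ε ∧ g₁ = h ≫ ε) ∧
        ¬ IsIso g₁ ∧
        ∀ {V U : C} (k : V ⟶ X) (h : V ⟶ U), S h →
          LDivides h (k ≫ f₁ ≫ g₁) → LDivides h (k ≫ f₁)))

/-- The morphism `Δ(a) ≫ Δ(Φ a) ≫ ⋯` of length `p`, where `Φ = D` on objects. -/
def deltaIter {C : Type*} [Category C] (D : C → C) (Δ : ∀ a : C, a ⟶ D a) :
    ∀ (p : ℕ) (a : C), (a ⟶ D^[p] a)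
  | 0, a => 𝟙 a
  | p + 1, a => Δ a ≫ deltaIter D Δ p (D a)

/-- The `n`-th power of an endomorphism. -/
def endoPow {C : Type*} [Category C] {A : C} (x : A ⟶ A) : ℕ → (A ⟶ A)
  | 0 => 𝟙 A
  | n + 1 => x ≫ endoPow x n

/-- `IsCyclicConj x f y` means that `f` decomposes as a composite `u₁ ≫ ⋯ ≫ uₙ` of
elementary cyclic conjugations from `x` to `y`: there are endomorphisms
`x = x₀, x₁, …, xₙ = y` with `uᵢ ≫ xᵢ = x_{i-1} ≫ uᵢ` and `uᵢ` left-dividing `x_{i-1}`. -/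
inductive IsCyclicConj {C : Type*} [Category C] :
    ∀ {A B : C}, (A ⟶ A) → (A ⟶ B) → (B ⟶ B) → Prop
  | nil {A : C} (x : A ⟶ A) : IsCyclicConj x (𝟙 A) x
  | cons {A B T : C} {x : A ⟶ A} {u : A ⟶ B} {y : B ⟶ B} {f : B ⟶ T} {z : T ⟶ T} :
      u ≫ y = x ≫ u → (∃ v : B ⟶ A, x = u ≫ v) → IsCyclicConj y f z →
      IsCyclicConj x (u ≫ f) z

/-!
Every non-invertible `f` has a non-invertible head `s ∈ S`, and `s ≼ Δ(A) ≼ xᴺ`. Taking the right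
lcm of `xᵏ` and a common left divisor `d` of `f` and `xᵏ⁺¹` and cancelling `xᵏ` on the left, such
a divisor descends from `xᵏ⁺¹` to `xᵏ` unless `f` and `x` already share a non-invertible left
divisor `u`; it cannot reach `x⁰ = 𝟙`, so such a `u` exists. Writing `x = u ≫ v` and `f = u ≫ f₁`, `u` is an elementary cyclic conjugation from `x`
to `v ≫ u`, which is again eventually divisible by `Δ` because `Δ` is quasi-central
(`g ≫ Δ = Δ ≫ w`), and `f₁` conjugates `v ≫ u` to `y`. As `f₁` is a proper right divisor of `f`,
right-Noetherianity ends the recursion.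
-/

section CyclicConjugacy

open Filter

variable {C : Type*} [Category C]

def LeftCancellative (C : Type*) [Category C] : Prop :=
  ∀ {X Y Z : C} (g : X ⟶ Y) (f h : Y ⟶ Z), g ≫ f = g ≫ h → f = h

def RightCancellative (C : Type*) [Category C] : Prop :=
  ∀ {X Y Z : C} (f h : X ⟶ Y) (g : Y ⟶ Z), f ≫ g = h ≫ g → f = h

def IsRightLcm {A X Y Z : C} (x : A ⟶ X) (y : A ⟶ Y) (z : A ⟶ Z) : Prop :=
  LDivides x z ∧ LDivides y z ∧
    ∀ {T : C} (t : A ⟶ T), LDivides x t → LDivides y t → LDivides z t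

def HasLocalRightLcms (C : Type*) [Category C] : Prop :=
  ∀ {A X Y : C} (x : A ⟶ X) (y : A ⟶ Y),
    (∃ (T : C) (t : A ⟶ T), LDivides x t ∧ LDivides y t) →
      ∃ (Z : C) (z : A ⟶ Z), IsRightLcm x y z

def IsProperRightDivisor (B : C) (m' m : Σ X : C, X ⟶ B) : Prop :=
  ∃ u : m.1 ⟶ m'.1, ¬ IsIso u ∧ m.2 = u ≫ m'.2

theorem LDivides.trans {X Y Z W : C} {f : X ⟶ Y} {g : X ⟶ Z} {h : X ⟶ W}
    (hfg : LDivides f g) (hgh : LDivides g h) : LDivides f h := by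
  obtain ⟨a, rfl⟩ := hfg
  obtain ⟨b, rfl⟩ := hgh
  exact ⟨a ≫ b, Category.assoc _ _ _⟩

theorem LDivides.of_comp_left (hl : LeftCancellative C) {X Y Z W : C} (g : X ⟶ Y)
    {e : Y ⟶ Z} {h : Y ⟶ W} (hd : LDivides (g ≫ e) (g ≫ h)) : LDivides e h := by
  obtain ⟨a, ha⟩ := hd
  exact ⟨a, hl g _ _ (by rw [ha, Category.assoc])⟩

theorem isIso_of_comp_eq_id (hl : LeftCancellative C) {X Y : C} {d : X ⟶ Y} {a : Y ⟶ X}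
    (h : d ≫ a = 𝟙 X) : IsIso d :=
  have : Epi d := ⟨hl d⟩
  have : IsSplitMono d := IsSplitMono.mk' ⟨a, h⟩
  isIso_of_epi_of_isSplitMono d

theorem wellFounded_isProperRightDivisor (hr : RightCancellative C)
    (noeth : ¬ ∃ (T : C) (X : ℕ → C) (f : ∀ i, X i ⟶ T) (h : ∀ i, X i ⟶ X (i + 1)),
      ∀ i, f i = h i ≫ f (i + 1) ∧
        ¬ ∃ ε : X i ⟶ X (i + 1), IsIso ε ∧ f i = ε ≫ f (i + 1))
    (B : C) : WellFounded (IsProperRightDivisor B) := by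
  refine wellFounded_iff_isEmpty_descending_chain.2 ⟨fun ⟨m, hm⟩ => ?_⟩
  choose u hu hmu using hm
  refine noeth ⟨B, fun i => (m i).1, fun i => (m i).2, u, fun i => ⟨hmu i, ?_⟩⟩
  rintro ⟨ε, hε, hεm⟩
  exact hu i (hr ε (u i) _ (hεm.symm.trans (hmu i)) ▸ hε)

theorem endoPow_succ {A : C} (x : A ⟶ A) (n : ℕ) : endoPow x (n + 1) = endoPow x n ≫ x := by
  induction n with
  | zero => simp [endoPow]
  | succ n ih =>
    show x ≫ endoPow x (n + 1) = (x ≫ endoPow x n) ≫ x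
    rw [ih, Category.assoc]

theorem endoPow_comp_eq_comp_endoPow {A B : C} {x : A ⟶ A} {y : B ⟶ B} {f : A ⟶ B}
    (hf : f ≫ y = x ≫ f) (n : ℕ) : endoPow x n ≫ f = f ≫ endoPow y n := by
  induction n with
  | zero => simp [endoPow]
  | succ n ih => rw [endoPow, endoPow, Category.assoc, ih, ← Category.assoc, ← hf, Category.assoc]

theorem endoPow_succ_rotate {X Y : C} (u : X ⟶ Y) (v : Y ⟶ X) (n : ℕ) :
    endoPow (v ≫ u) (n + 1) = v ≫ endoPow (u ≫ v) n ≫ u := by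
  induction n with
  | zero => simp [endoPow]
  | succ n ih => rw [endoPow, ih, endoPow]; simp only [Category.assoc]

theorem isCyclicConj_of_isIso {A B : C} {x : A ⟶ A} {y : B ⟶ B} {f : A ⟶ B} [IsIso f]
    (hf : f ≫ y = x ≫ f) : IsCyclicConj x f y := by
  simpa using IsCyclicConj.cons hf ⟨inv f ≫ x, by simp⟩ (IsCyclicConj.nil y)

theorem IsCompositeOf.exists_comp_delta_eq_delta_comp (D : C → C) (Δ : ∀ a : C, a ⟶ D a)
    {S : ∀ ⦃X Y : C⦄, (X ⟶ Y) → Prop}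
    (hS : ∀ {X Y : C} (f : X ⟶ Y), S f ↔ ∃ u : Y ⟶ D X, Δ X = f ≫ u)
    (hS' : ∀ {X Y : C} (f : X ⟶ Y), S f ↔
      ∃ (b : C) (e : D b = Y) (h : b ⟶ X), h ≫ f = Δ b ≫ eqToHom e)
    {b a : C} {g : b ⟶ a} (hg : IsCompositeOf (fun ⦃X Y : C⦄ (g : X ⟶ Y) => S g ∨ IsIso g) g) :
    ∃ w : D b ⟶ D a, g ≫ Δ a = Δ b ≫ w := by
  induction hg with
  | id X => exact ⟨𝟙 _, by simp⟩
  | @of X Y g hg =>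
    have hSg : S g := hg.elim (fun h => h) fun _ => (hS g).2 ⟨inv g ≫ Δ X, by simp⟩
    obtain ⟨u, hu⟩ := (hS g).1 hSg
    -- `u` right-divides `Δ X`, hence left-divides `Δ Y`
    have hSu : S u := (hS' u).2 ⟨X, rfl, g, by simpa using hu.symm⟩
    obtain ⟨w, hw⟩ := (hS u).1 hSu
    exact ⟨w, by rw [hw, ← Category.assoc, ← hu]⟩
  | comp _ _ ih₁ ih₂ =>
    obtain ⟨w₁, hw₁⟩ := ih₁
    obtain ⟨w₂, hw₂⟩ := ih₂
    exact ⟨w₁ ≫ w₂, by rw [Category.assoc, hw₂, ← Category.assoc, hw₁, Category.assoc]⟩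

theorem IsCompositeOf.isIso_or_exists_nonIso_prefix {S : ∀ ⦃X Y : C⦄, (X ⟶ Y) → Prop}
    (hswap : ∀ {X Y Z : C} (ε : X ⟶ Y) (f : Y ⟶ Z), IsIso ε → S f →
      (∃ (W : C) (g : X ⟶ W) (ε' : W ⟶ Z), S g ∧ IsIso ε' ∧ ε ≫ f = g ≫ ε') ∨
        IsIso (ε ≫ f))
    {X Y : C} {g : X ⟶ Y} (hg : IsCompositeOf (fun ⦃X Y : C⦄ (g : X ⟶ Y) => S g ∨ IsIso g) g) :
    IsIso g ∨ ∃ (Z : C) (s : X ⟶ Z) (g' : Z ⟶ Y), S s ∧ ¬ IsIso s ∧ g = s ≫ g' := by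
  induction hg with
  | id X => exact .inl inferInstance
  | @of X Y g hg =>
    by_cases hgi : IsIso g
    · exact .inl hgi
    · exact .inr ⟨Y, g, 𝟙 Y, hg.resolve_right hgi, hgi, (Category.comp_id g).symm⟩
  | @comp X Y Z g h _ _ ih₁ ih₂ =>
    rcases ih₁ with hgi | ⟨W, s, g', hs, hsi, rfl⟩
    · rcases ih₂ with hhi | ⟨W, s, h', hs, hsi, rfl⟩
      · exact .inl inferInstance
      · rcases hswap g s hgi hs with ⟨V, s₁, ε, hs₁, hε, he⟩ | hgsi
        · refine .inr ⟨V, s₁, ε ≫ h', hs₁, fun hs₁i => hsi ?_, by simp only [← Category.assoc, he]⟩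
          have : IsIso (g ≫ s) := he ▸ inferInstance
          exact IsIso.of_isIso_comp_left g s
        · exact (hsi (IsIso.of_isIso_comp_left g s)).elim
    · exact .inr ⟨W, s, g' ≫ h, hs, hsi, Category.assoc _ _ _⟩

theorem eventually_ldivides_endoPow_rotate (D : C → C) (Δ : ∀ a : C, a ⟶ D a)
    (hΔ : ∀ {b a : C} (g : b ⟶ a), ∃ w : D b ⟶ D a, g ≫ Δ a = Δ b ≫ w)
    {X Y : C} (u : X ⟶ Y) (v : Y ⟶ X)
    (h : ∀ᶠ n in atTop, LDivides (Δ X) (endoPow (u ≫ v) n)) :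
    ∀ᶠ n in atTop, LDivides (Δ Y) (endoPow (v ≫ u) n) := by
  obtain ⟨w, hw⟩ := hΔ v
  obtain ⟨N, hN⟩ := eventually_atTop.1 h
  refine eventually_atTop.2 ⟨N + 1, fun n hn => ?_⟩
  obtain ⟨m, rfl⟩ : ∃ m, n = m + 1 := ⟨n - 1, by omega⟩
  obtain ⟨c, hc⟩ := hN m (by omega)
  refine ⟨w ≫ c ≫ u, ?_⟩
  rw [endoPow_succ_rotate, hc, Category.assoc, ← Category.assoc v, hw, Category.assoc]

theorem exists_nonIso_common_leftDivisor (hl : LeftCancellative C) (hlcm : HasLocalRightLcms C)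
    {A B : C} {x : A ⟶ A} {y : B ⟶ B} {f : A ⟶ B} (hf : f ≫ y = x ≫ f) (k : ℕ) {W : C}
    (d : A ⟶ W) (hd : ¬ IsIso d) (hdf : LDivides d f) (hdx : LDivides d (endoPow x k)) :
    ∃ (Y : C) (e : A ⟶ Y), ¬ IsIso e ∧ LDivides e f ∧ LDivides e x := by
  induction k with
  | zero =>
    obtain ⟨a, ha⟩ := hdx
    exact (hd (isIso_of_comp_eq_id hl ha.symm)).elim
  | succ k ih =>
    rw [endoPow_succ] at hdx
    have hdxf : LDivides d (endoPow x k ≫ f) := by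
      rw [endoPow_comp_eq_comp_endoPow hf]
      exact hdf.trans ⟨_, rfl⟩
    -- the right lcm `xᵏ ≫ e` of `xᵏ` and `d` divides `xᵏ ≫ x` and `xᵏ ≫ f = f ≫ yᵏ`
    obtain ⟨Z, _, ⟨e, rfl⟩, ⟨p, hp⟩, hmin⟩ := hlcm (endoPow x k) d ⟨A, _, ⟨x, rfl⟩, hdx⟩
    have hex : LDivides e x := .of_comp_left hl _ (hmin _ ⟨x, rfl⟩ hdx)
    have hef : LDivides e f := .of_comp_left hl _ (hmin _ ⟨f, rfl⟩ hdxf)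
    by_cases he : IsIso e
    · exact ih ⟨p ≫ inv e, by rw [← Category.assoc, ← hp]; simp⟩
    · exact ⟨Z, e, he, hef, hex⟩

theorem isCyclicConj_of_exists_common_leftDivisor (hl : LeftCancellative C) {B : C} {y : B ⟶ B}
    (hwf : WellFounded (IsProperRightDivisor B)) (P : ∀ ⦃X : C⦄, (X ⟶ X) → Prop)
    (hP : ∀ {X Y : C} (u : X ⟶ Y) (v : Y ⟶ X), P (u ≫ v) → P (v ≫ u))
    (hdiv : ∀ {X : C} (x : X ⟶ X) (f : X ⟶ B), P x → f ≫ y = x ≫ f → ¬ IsIso f →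
      ∃ (Y : C) (u : X ⟶ Y), ¬ IsIso u ∧ LDivides u f ∧ LDivides u x)
    {A : C} (x : A ⟶ A) (f : A ⟶ B) (hx : P x) (hf : f ≫ y = x ≫ f) :
    IsCyclicConj x f y := by
  suffices H : ∀ m : Σ X : C, X ⟶ B, ∀ x : m.1 ⟶ m.1, P x → m.2 ≫ y = x ≫ m.2 →
      IsCyclicConj x m.2 y from H ⟨A, f⟩ x hx hf
  intro m
  induction m using hwf.induction with
  | _ m ih =>
  obtain ⟨X, f⟩ := m
  dsimp only
  intro x hx hf
  by_cases hfi : IsIso f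
  · exact isCyclicConj_of_isIso hf
  obtain ⟨Y, u, hu, ⟨f₁, rfl⟩, ⟨v, rfl⟩⟩ := hdiv x f hx hf hfi
  have hf₁ : f₁ ≫ y = (v ≫ u) ≫ f₁ :=
    hl u _ _ (by simp only [← Category.assoc, hf])
  exact IsCyclicConj.cons (Category.assoc _ _ _).symm ⟨v, rfl⟩
    (ih ⟨Y, f₁⟩ ⟨u, hu, rfl⟩ (v ≫ u) (hP u v hx) hf₁)

end CyclicConjugacy

theorem conjugacy_of_periodic_is_cyclic_general
    {C : Type*} [Category C]
    (hl : ∀ {X Y Z : C} (g : X ⟶ Y) (f h : Y ⟶ Z), g ≫ f = g ≫ h → f = h)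
    (hr : ∀ {X Y Z : C} (f h : X ⟶ Y) (g : Y ⟶ Z), f ≫ g = h ≫ g → f = h)
    (noeth : ¬ ∃ (T : C) (X : ℕ → C) (f : ∀ i, X i ⟶ T) (h : ∀ i, X i ⟶ X (i + 1)),
      ∀ i, f i = h i ≫ f (i + 1) ∧
        ¬ ∃ ε : X i ⟶ X (i + 1), IsIso ε ∧ f i = ε ≫ f (i + 1))
    (loclcm : ∀ {A X Y : C} (x : A ⟶ X) (y : A ⟶ Y),
      (∃ (T : C) (t : A ⟶ T), (∃ u, t = x ≫ u) ∧ (∃ u, t = y ≫ u)) →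
      ∃ (Z : C) (z : A ⟶ Z), (∃ u, z = x ≫ u) ∧ (∃ u, z = y ≫ u) ∧
        ∀ {T : C} (t : A ⟶ T), (∃ u, t = x ≫ u) → (∃ u, t = y ≫ u) → ∃ u, t = z ≫ u)
    -- the Garside map
    (D : C → C) (Δ : ∀ a : C, a ⟶ D a)
    (S : ∀ ⦃X Y : C⦄, (X ⟶ Y) → Prop)
    -- `S` is the class of left divisors of `Δ` ...
    (hS : ∀ {X Y : C} (f : X ⟶ Y), S f ↔ ∃ u : Y ⟶ D X, Δ X = f ≫ u)
    -- ... which coincides with the class of right divisors of `Δ`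
    (hS' : ∀ {X Y : C} (f : X ⟶ Y), S f ↔
      ∃ (b : C) (e : D b = Y) (h : b ⟶ X), h ≫ f = Δ b ≫ eqToHom e)
    -- `S` is a Garside family
    (hgar : IsGarsideFamily S)
    {A : C} (x : A ⟶ A)
    (hx : ∃ N : ℕ, ∀ n, N ≤ n → ∃ u : D A ⟶ A, endoPow x n = Δ A ≫ u)
    {B : C} (y : B ⟶ B) (f : A ⟶ B) (hf : f ≫ y = x ≫ f) :
    IsCyclicConj x f y := by
  refine isCyclicConj_of_exists_common_leftDivisor hl (wellFounded_isProperRightDivisor hr noeth B)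
    (fun X x => ∀ᶠ n in Filter.atTop, LDivides (Δ X) (endoPow x n))
    (fun u v => eventually_ldivides_endoPow_rotate D Δ
      (fun g => (hgar.1 g).exists_comp_delta_eq_delta_comp D Δ hS hS') u v)
    ?_ x f (Filter.eventually_atTop.2 hx) hf
  intro X x f hx hf hfi
  obtain ⟨Z, s, f', hs, hsi, rfl⟩ :=
    ((hgar.1 f).isIso_or_exists_nonIso_prefix hgar.2.1).resolve_left hfi
  obtain ⟨N, hN⟩ := hx.exists
  exact exists_nonIso_common_leftDivisor hl loclcm hf N s hsi ⟨f', rfl⟩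
    (LDivides.trans ((hS s).1 hs) hN)

/-- In a cancellative, right-Noetherian category with local right lcms equipped with a
Garside map `Δ`, if an endomorphism `x` satisfies `Δ ≼ xⁿ` for all large `n`, then every
conjugation from `x` is a composite of cyclic conjugations. -/
theorem conjugacy_of_periodic_is_cyclic
    {C : Type*} [Category C]
    (hl : ∀ {X Y Z : C} (g : X ⟶ Y) (f h : Y ⟶ Z), g ≫ f = g ≫ h → f = h)
    (hr : ∀ {X Y Z : C} (f h : X ⟶ Y) (g : Y ⟶ Z), f ≫ g = h ≫ g → f = h)
    (noeth : ¬ ∃ (T : C) (X : ℕ → C) (f : ∀ i, X i ⟶ T) (h : ∀ i, X i ⟶ X (i + 1)),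
      ∀ i, f i = h i ≫ f (i + 1) ∧
        ¬ ∃ ε : X i ⟶ X (i + 1), IsIso ε ∧ f i = ε ≫ f (i + 1))
    (loclcm : ∀ {A X Y : C} (x : A ⟶ X) (y : A ⟶ Y),
      (∃ (T : C) (t : A ⟶ T), (∃ u, t = x ≫ u) ∧ (∃ u, t = y ≫ u)) →
      ∃ (Z : C) (z : A ⟶ Z), (∃ u, z = x ≫ u) ∧ (∃ u, z = y ≫ u) ∧
        ∀ {T : C} (t : A ⟶ T), (∃ u, t = x ≫ u) → (∃ u, t = y ≫ u) → ∃ u, t = z ≫ u)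
    -- the Garside map
    (D : C → C) (Δ : ∀ a : C, a ⟶ D a)
    (S : ∀ ⦃X Y : C⦄, (X ⟶ Y) → Prop)
    -- `S` is the class of left divisors of `Δ` ...
    (hS : ∀ {X Y : C} (f : X ⟶ Y), S f ↔ ∃ u : Y ⟶ D X, Δ X = f ≫ u)
    -- ... which coincides with the class of right divisors of `Δ`
    (hS' : ∀ {X Y : C} (f : X ⟶ Y), S f ↔
      ∃ (b : C) (e : D b = Y) (h : b ⟶ X), h ≫ f = Δ b ≫ eqToHom e)
    -- `S` is a Garside family
    (hgar : IsGarsideFamily S)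
    -- every morphism left-divides some power `Δᵖ` (with `p ≥ 1`)
    (hpow : ∀ {a T : C} (f : a ⟶ T), ∃ p : ℕ, 1 ≤ p ∧
      ∃ u : T ⟶ D^[p] a, deltaIter D Δ p a = f ≫ u)
    {A : C} (x : A ⟶ A)
    (hx : ∃ N : ℕ, ∀ n, N ≤ n → ∃ u : D A ⟶ A, endoPow x n = Δ A ≫ u)
    {B : C} (y : B ⟶ B) (f : A ⟶ B) (hf : f ≫ y = x ≫ f) :
    IsCyclicConj x f y :=
  conjugacy_of_periodic_is_cyclic_general hl hr noeth loclcm D Δ S hS hS' hgar x hx y f hf
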